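/- A linear map d : V → V is a derivation of the Leibniz algebra L₁₈ if and only if there exist complex numbers a, b, m, p, q, r, s such that d(e₁) = a·e₁ + p·e₃ + q·e₄, d(e₂) = m·e₁ + b·e₂ + r·e₃ + s·e₄, d(e₃) = (a+b)·e₃, and d(e₄) = 2b·e₄. Consequently, the space of derivations of L₁₈ is a 7-dimensional linear subspace of End(V). -/

import Mathlib

/-- `V = ℂ⁴`. -/
abbrev V : Type := Fin 4 → ℂ

/-- standard basis: `e 0 = e₁`, ..., `e 3 = e₄`. -/
def e (i : Fin 4) : V := Pi.single i 1

/-- Bracket of the Leibniz algebra `L₁₈`: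
`⟦e₁,e₂⟧ = e₃`, `⟦e₂,e₁⟧ = -e₃`, `⟦e₂,e₂⟧ = e₄`, all other basis products zero. -/
def br (x y : V) : V :=
  (x 0 * y 1 - x 1 * y 0) • e 2 + (x 1 * y 1) • e 3

/-- A derivation. -/
def IsDer (d : V →ₗ[ℂ] V) : Prop :=
  ∀ x y : V, d (br x y) = br (d x) y + br x (d y)

@[simp] lemma e_apply (i j : Fin 4) : e i j = if j = i then 1 else 0 := by
  simp [e, Pi.single_apply]

lemma decomp (x : V) : x = x 0 • e 0 + x 1 • e 1 + x 2 • e 2 + x 3 • e 3 := by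
  funext i; fin_cases i <;> simp

lemma ext_basis (d d' : V →ₗ[ℂ] V) (h : ∀ i, d (e i) = d' (e i)) : d = d' := by
  apply LinearMap.ext; intro x
  rw [decomp x]
  simp [h 0, h 1, h 2, h 3]

lemma der_iff (d : V →ₗ[ℂ] V) : IsDer d ↔
    (d (e 0) 1 = 0 ∧ d (e 2) = (d (e 0) 0 + d (e 1) 1) • e 2 ∧
     d (e 3) = (2 * d (e 1) 1) • e 3) := by
  constructor
  · intro hd
    have h01 := hd (e 0) (e 1)
    have h10 := hd (e 1) (e 0)
    have h11 := hd (e 1) (e 1)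
    have hb01 : br (e 0) (e 1) = e 2 := by funext i; fin_cases i <;> simp [br]
    have hb10 : br (e 1) (e 0) = -e 2 := by funext i; fin_cases i <;> simp [br]
    have hb11 : br (e 1) (e 1) = e 3 := by funext i; fin_cases i <;> simp [br]
    rw [hb01] at h01; rw [hb10, map_neg] at h10; rw [hb11] at h11
    have hA1 : d (e 0) 1 = 0 := by
      have c1 := congrFun h01 3
      have c2 := congrFun h10 3
      simp [br] at c1 c2
      linear_combination -(c1 + c2)/2
    refine ⟨hA1, ?_, ?_⟩
    · rw [h01]; funext i; fin_cases i <;> (simp [br, hA1]; try ring)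
    · rw [h11]; funext i; fin_cases i <;> (simp [br]; try ring)
  · rintro ⟨hA1, h2, h3⟩
    set a := d (e 0) 0 with ha
    set m := d (e 1) 0 with hm
    set b := d (e 1) 1 with hbb
    have hd0 : ∀ x : V, d x 0 = a * x 0 + m * x 1 := by
      intro x
      conv_lhs => rw [decomp x]
      simp [h2, h3]
      ring
    have hd1 : ∀ x : V, d x 1 = b * x 1 := by
      intro x
      conv_lhs => rw [decomp x]
      simp [h2, h3, hA1]
      rw [hbb]; ring
    intro x y
    have hbxy : br x y = (x 0 * y 1 - x 1 * y 0) • e 2 + (x 1 * y 1) • e 3 := rfl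
    rw [hbxy, map_add, map_smul, map_smul, h2, h3]
    show _ = br (d x) y + br x (d y)
    funext i
    simp only [br, Pi.add_apply, Pi.smul_apply, smul_eq_mul, e_apply, hd0, hd1]
    fin_cases i <;> simp <;> ring

lemma der_iff_explicit (d : V →ₗ[ℂ] V) : IsDer d ↔ ∃ a b m p q r s : ℂ,
    d (e 0) = a • e 0 + p • e 2 + q • e 3 ∧
    d (e 1) = m • e 0 + b • e 1 + r • e 2 + s • e 3 ∧
    d (e 2) = (a + b) • e 2 ∧
    d (e 3) = (2 * b) • e 3 := by
  rw [der_iff]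
  constructor
  · rintro ⟨hA1, h2, h3⟩
    refine ⟨d (e 0) 0, d (e 1) 1, d (e 1) 0, d (e 0) 2, d (e 0) 3, d (e 1) 2, d (e 1) 3,
      ?_, ?_, h2, h3⟩
    · funext i; fin_cases i <;> simp [hA1]
    · funext i; fin_cases i <;> simp
  · rintro ⟨a, b, m, p, q, r, s, h0, h1, h2, h3⟩
    have e0 : d (e 0) 0 = a := by rw [h0]; simp
    have e01 : d (e 0) 1 = 0 := by rw [h0]; simp
    have e1 : d (e 1) 1 = b := by rw [h1]; simp
    exact ⟨e01, by rw [h2, e0, e1], by rw [h3, e1]⟩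

def M (c : Fin 7 → ℂ) : Matrix (Fin 4) (Fin 4) ℂ :=
  !![c 0, c 2, 0, 0;
     0,   c 1, 0, 0;
     c 3, c 5, c 0 + c 1, 0;
     c 4, c 6, 0, 2 * c 1]

noncomputable def Φ : (Fin 7 → ℂ) →ₗ[ℂ] (V →ₗ[ℂ] V) where
  toFun c := Matrix.toLin' (M c)
  map_add' c c' := by
    have : M (c + c') = M c + M c' := by
      funext i j; fin_cases i <;> fin_cases j <;> simp [M] <;> ring
    simp only [this, map_add]
  map_smul' t c := by
    have : M (t • c) = t • M c := by
      funext i j; fin_cases i <;> fin_cases j <;> simp [M, Matrix.smul_apply] <;> ring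
    simp only [this, map_smul]
    rfl

lemma Phi_apply (c : Fin 7 → ℂ) (j i : Fin 4) : Φ c (e j) i = M c i j := by
  show (Matrix.toLin' (M c)) (e j) i = M c i j
  fin_cases j <;>
    simp [Matrix.toLin'_apply, Matrix.mulVec, dotProduct, Fin.sum_univ_four]

lemma Phi_cols (c : Fin 7 → ℂ) :
    Φ c (e 0) = c 0 • e 0 + c 3 • e 2 + c 4 • e 3 ∧
    Φ c (e 1) = c 2 • e 0 + c 1 • e 1 + c 5 • e 2 + c 6 • e 3 ∧
    Φ c (e 2) = (c 0 + c 1) • e 2 ∧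
    Φ c (e 3) = (2 * c 1) • e 3 := by
  refine ⟨?_, ?_, ?_, ?_⟩ <;>
    (funext i; rw [Phi_apply]; fin_cases i <;> simp [M])

lemma Phi_range : (LinearMap.range Φ : Set (V →ₗ[ℂ] V)) = {d | IsDer d} := by
  ext d
  simp only [SetLike.mem_coe, LinearMap.mem_range, Set.mem_setOf_eq]
  constructor
  · rintro ⟨c, rfl⟩
    obtain ⟨h0, h1, h2, h3⟩ := Phi_cols c
    exact (der_iff_explicit _).2 ⟨c 0, c 1, c 2, c 3, c 4, c 5, c 6, h0, h1, h2, h3⟩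
  · intro hd
    obtain ⟨a, b, m, p, q, r, s, h0, h1, h2, h3⟩ := (der_iff_explicit d).1 hd
    refine ⟨![a, b, m, p, q, r, s], ?_⟩
    obtain ⟨g0, g1, g2, g3⟩ := Phi_cols ![a, b, m, p, q, r, s]
    apply ext_basis
    intro i
    fin_cases i
    · show (Φ ![a, b, m, p, q, r, s]) (e 0) = d (e 0); rw [g0, h0]; norm_num [show (![a,b,m,p,q,r,s] : Fin 7 → ℂ) 3 = p from rfl,
        show (![a,b,m,p,q,r,s] : Fin 7 → ℂ) 4 = q from rfl]
    · show (Φ ![a, b, m, p, q, r, s]) (e 1) = d (e 1); rw [g1, h1]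
      norm_num [show (![a,b,m,p,q,r,s] : Fin 7 → ℂ) 2 = m from rfl,
        show (![a,b,m,p,q,r,s] : Fin 7 → ℂ) 5 = r from rfl,
        show (![a,b,m,p,q,r,s] : Fin 7 → ℂ) 6 = s from rfl]
    · show (Φ ![a, b, m, p, q, r, s]) (e 2) = d (e 2); rw [g2, h2]; norm_num
    · show (Φ ![a, b, m, p, q, r, s]) (e 3) = d (e 3); rw [g3, h3]; norm_num

lemma Phi_inj : Function.Injective Φ := by
  rw [injective_iff_map_eq_zero]
  intro c hc
  have h : ∀ j i, M c i j = 0 := by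
    intro j i
    rw [← Phi_apply, hc]
    rfl
  funext k
  fin_cases k
  · exact h 0 0
  · exact h 1 1
  · exact h 1 0
  · exact h 0 2
  · exact h 0 3
  · exact h 1 2
  · exact h 1 3

theorem derivations_of_L18 :
    (∀ d : V →ₗ[ℂ] V, IsDer d ↔ ∃ a b m p q r s : ℂ,
      d (e 0) = a • e 0 + p • e 2 + q • e 3 ∧
      d (e 1) = m • e 0 + b • e 1 + r • e 2 + s • e 3 ∧
      d (e 2) = (a + b) • e 2 ∧
      d (e 3) = (2 * b) • e 3) ∧
    ∃ S : Submodule ℂ (V →ₗ[ℂ] V),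
      (S : Set (V →ₗ[ℂ] V)) = {d | IsDer d} ∧ Module.finrank ℂ S = 7 := by
  refine ⟨der_iff_explicit, LinearMap.range Φ, Phi_range, ?_⟩
  rw [LinearMap.finrank_range_of_inj Phi_inj]
  simp
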